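/- arXiv:math/9903027 — 4 statements merged into one kernel-verified Lean document; each statement's English description precedes it below -/
import Mathlib

section
/- Let L be a modular lattice of finite length with Boolean sublattice L₀ as above, G ≤ Aut(L), H = G(L₀) the subgroup fixing L₀ pointwise, and F a subgroup of G containing H. Define σ_{ij} = σ_{ij}(F) as the join of all x ≤ e_j such that H_{ij}(x) ∩ F ≠ ∅ (and σ_{ii} = e_i). Assume condition 3⁰: if a ∈ G and [a(e_i)]_i = e_i for some i, there exists h ∈ H_i with [ha(x_i)]_i = [ah(x_i)]_i = x_i for all x_i ≤ e_i. Then each σ_{ij} is fixed by every element of H, i.e., σ_{ij} ∈ L(H). -/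
open Finset

/-- The group of lattice automorphisms of `L` (order automorphisms), with composition as
multiplication. -/
instance latticeAutGroup {L : Type*} [Lattice L] : Group (L ≃o L) where
  mul f g := g.trans f
  one := OrderIso.refl L
  inv := OrderIso.symm
  mul_assoc f g h := rfl
  one_mul f := rfl
  mul_one f := rfl
  inv_mul_cancel f := by ext x; exact f.symm_apply_apply x

variable {L : Type*} [CompleteLattice L] {n : ℕ}

/-- `ê i`: the join of all the atoms `e j`, `j ≠ i`. -/
def hatE (e : Fin n → L) (i : Fin n) : L := ((univ : Finset (Fin n)).erase i).sup e

/-- The `i`-th component of the support: `[x]ᵢ = (x ⊔ êᵢ) ⊓ eᵢ`. -/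
def sc (e : Fin n → L) (x : L) (i : Fin n) : L := (x ⊔ hatE e i) ⊓ e i

/-- The set `L̄₀` of all elements of the form `x₁ ⊔ ⋯ ⊔ xₙ` with `xᵢ ≤ eᵢ`. -/
def L0bar (e : Fin n → L) : Set L :=
  {x | ∃ y : Fin n → L, (∀ i, y i ≤ e i) ∧ x = (univ : Finset (Fin n)).sup y}

/-- `H = G(L₀)`: the elements of `G` fixing the sublattice `L₀` generated by the atoms
`e₁, …, eₙ` (together with `⊥`, `⊤`) pointwise; equivalently, fixing every `e i`. -/
def Hset (e : Fin n → L) (G : Subgroup (L ≃o L)) : Set (L ≃o L) :=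
  {g | g ∈ G ∧ ∀ i, g (e i) = e i}

/-- `L₀′ = L(H)`: the sublattice of elements fixed by every element of `H`. -/
def L0' (e : Fin n → L) (G : Subgroup (L ≃o L)) : Set L :=
  {x | ∀ h ∈ Hset e G, h x = x}

/-- `Hᵢ`: the automorphisms in `H` which fix every `x ∈ L` with `[x]ᵢ = ⊥`. -/
def HiSet (e : Fin n → L) (G : Subgroup (L ≃o L)) (i : Fin n) : Set (L ≃o L) :=
  {h | h ∈ Hset e G ∧ ∀ x : L, sc e x i = ⊥ → h x = x}

/-- The set `H_{ij}(x)` of transvections: elements `f ∈ G` such that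
(1) `f y = y` for every `s ≠ i` and `y ≤ e s`;
(2) `[f y]ᵢ = y` for every `y ≤ eᵢ`;
(3) `[f eᵢ]ₖ = ⊥` for `k ∉ {i,j}`, `[f eᵢ]ᵢ = eᵢ` and `[f eᵢ]ⱼ = x`. -/
def Hij (e : Fin n → L) (G : Subgroup (L ≃o L)) (i j : Fin n) (x : L) : Set (L ≃o L) :=
  {f | f ∈ G ∧
       (∀ s, s ≠ i → ∀ y, y ≤ e s → f y = y) ∧
       (∀ y, y ≤ e i → sc e (f y) i = y) ∧
       (∀ k, k ≠ i → k ≠ j → sc e (f (e i)) k = ⊥) ∧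
       sc e (f (e i)) i = e i ∧ sc e (f (e i)) j = x}

/-- `G(S)`: the pointwise stabilizer in `G` of a set `S ⊆ L`. -/
def GFix (G : Subgroup (L ≃o L)) (S : Set L) : Set (L ≃o L) :=
  {g | g ∈ G ∧ ∀ x ∈ S, g x = x}

/-- The sublattice of `L` generated by a set `S` (the smallest subset containing `S` closed
under `⊔` and `⊓`). -/
def latClosure (S : Set L) : Set L :=
  ⋂₀ {T : Set L | S ⊆ T ∧ ∀ a ∈ T, ∀ b ∈ T, a ⊔ b ∈ T ∧ a ⊓ b ∈ T}

/-- The ideal of transvections `σ_{ij}(F)`: for `i ≠ j`, the join of all `x ≤ eⱼ` with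
`H_{ij}(x) ∩ F ≠ ∅`; and `σ_{ii} = eᵢ`. -/
def sigmaF (e : Fin n → L) (G : Subgroup (L ≃o L)) (F : Subgroup (L ≃o L))
    (i j : Fin n) : L :=
  if i = j then e i
  else sSup {x | x ≤ e j ∧ (Hij e G i j x ∩ (F : Set (L ≃o L))).Nonempty}

/-- An order automorphism fixing every atom `e i` fixes `êᵢ`. -/
lemma hatE_fix {L : Type*} [CompleteLattice L] {n : ℕ} (e : Fin n → L)
    (h : L ≃o L) (he : ∀ i, h (e i) = e i) (i : Fin n) : h (hatE e i) = hatE e i := by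
  unfold hatE
  induction ((univ : Finset (Fin n)).erase i) using Finset.cons_induction with
  | empty => simp only [Finset.sup_empty]; exact map_bot h
  | cons a s ha ih => rw [Finset.sup_cons, map_sup, he, ih]

/-- An order automorphism fixing every atom commutes with taking support components. -/
lemma sc_map {L : Type*} [CompleteLattice L] {n : ℕ} (e : Fin n → L)
    (h : L ≃o L) (he : ∀ i, h (e i) = e i) (z : L) (k : Fin n) :
    sc e (h z) k = h (sc e z k) := by
  unfold sc
  rw [map_inf, map_sup, hatE_fix e h he, he]

/-- **Lemma 5.5.** Let `L` be a modular lattice of finite length, `L₀` a Boolean sublattice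
with atoms `e₁, …, eₙ` and the same `⊥`, `⊤` as `L`, `G ≤ Aut L`, `H = G(L₀)`, and `F` a
subgroup with `H ≤ F ≤ G`. Assume condition `3⁰`: if `a ∈ G` and `[a eᵢ]ᵢ = eᵢ` for some
`i`, then there is `h ∈ Hᵢ` with `[h (a y)]ᵢ = [a (h y)]ᵢ = y` for all `y ≤ eᵢ`.
Then every `σ_{ij} = σ_{ij}(F)` is fixed by every element of `H`, i.e. `σ_{ij} ∈ L(H)`. -/
theorem sigma_mem_L0' {L : Type*} [CompleteLattice L] [IsModularLattice L]
    [WellFoundedLT L] [WellFoundedGT L] {n : ℕ} (e : Fin n → L)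
    (G F : Subgroup (L ≃o L))
    (hne : ∀ i, e i ≠ ⊥)
    (hsup : (univ : Finset (Fin n)).sup e = ⊤)
    (hindep : ∀ i, e i ⊓ hatE e i = ⊥)
    (hHF : Hset e G ⊆ (F : Set (L ≃o L))) (hFG : F ≤ G)
    (c3 : ∀ a ∈ G, ∀ i, sc e ((a : L ≃o L) (e i)) i = e i →
      ∃ h ∈ HiSet e G i, ∀ y, y ≤ e i →
        sc e (h ((a : L ≃o L) y)) i = y ∧ sc e ((a : L ≃o L) (h y)) i = y) :
    ∀ i j : Fin n, ∀ h ∈ Hset e G, h (sigmaF e G F i j) = sigmaF e G F i j := by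
  intro i j h hh
  obtain ⟨hG, he⟩ := hh
  by_cases hij : i = j
  · simp only [sigmaF, if_pos hij]; exact he i
  · simp only [sigmaF, if_neg hij]
    set S : Set L := {x | x ≤ e j ∧ (Hij e G i j x ∩ (F : Set (L ≃o L))).Nonempty} with hS
    -- closure of S under any element of Hset
    have key : ∀ h' : L ≃o L, h' ∈ G → (∀ k, h' (e k) = e k) → ∀ x ∈ S, h' x ∈ S := by
      intro h' h'G h'e x hx
      obtain ⟨hxej, f, ⟨fG, f1, f2, f3, f4, f5⟩, fF⟩ := hx
      have h'F : h' ∈ F := hHF ⟨h'G, h'e⟩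
      have h'symm_e : ∀ k, h'.symm (e k) = e k := by
        intro k; conv_lhs => rw [← h'e k]
        exact h'.symm_apply_apply _
      refine ⟨le_trans (h'.monotone hxej) (le_of_eq (h'e j)), h' * f * h'⁻¹, ?_, ?_⟩
      · have gapp : ∀ y : L, (h' * f * h'⁻¹) y = h' (f (h'.symm y)) := fun _ => rfl
        refine ⟨mul_mem (mul_mem h'G fG) (inv_mem h'G), ?_, ?_, ?_, ?_, ?_⟩
        · intro s hs y hy
          rw [gapp]
          have : h'.symm y ≤ e s := le_trans (h'.symm.monotone hy) (le_of_eq (h'symm_e s))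
          rw [f1 s hs _ this, h'.apply_symm_apply]
        · intro y hy
          have hy' : h'.symm y ≤ e i := le_trans (h'.symm.monotone hy) (le_of_eq (h'symm_e i))
          rw [gapp, sc_map e h' h'e, f2 _ hy', h'.apply_symm_apply]
        · intro k hk1 hk2
          rw [gapp, h'symm_e i, sc_map e h' h'e, f3 k hk1 hk2, map_bot]
        · rw [gapp, h'symm_e i, sc_map e h' h'e, f4, h'e i]
        · rw [gapp, h'symm_e i, sc_map e h' h'e, f5]
      · exact mul_mem (mul_mem h'F fF) (inv_mem h'F)
    have hsymm_e : ∀ k, h.symm (e k) = e k := by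
      intro k; conv_lhs => rw [← he k]; exact h.symm_apply_apply _
    have hsymmG : h.symm ∈ G := inv_mem hG
    apply le_antisymm
    · rw [map_sSup]
      apply sSup_le
      rintro y ⟨x, hx, rfl⟩
      exact le_sSup (key h hG he x hx)
    · apply sSup_le
      intro x hx
      have : h.symm x ∈ S := key h.symm hsymmG hsymm_e x hx
      calc x = h (h.symm x) := (h.apply_symm_apply x).symm
        _ ≤ h (sSup S) := h.monotone (le_sSup this)
end

section
/- Let L, L₀, G, H be as above and suppose conditions 1⁰–11⁰ of the paper hold. Let τ = (τ_{ij}) be a net collection in L₀′ = L(H), i.e., a family with τ_{ij} ≤ e_j, τ_{ii} = e_i, each τ_{ij} ∈ L₀′, and such that for every g ∈ G, [g(e_i)]_j ≤ τ_{ij} for all i,j if and only if [g(τ_{ki})]_j ≤ τ_{kj} for all i,j,k. Let K_τ be the sublattice of L₀′ generated by 0 and the elements ∑_j τ_{ij}, i = 1,...,n. Then G(K_τ) = ⟨H, H_{ij}(x) : x ≤ τ_{ij}, i ≠ j⟩. -/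
open Finset

variable {L : Type*} [CompleteLattice L] {n : ℕ}

/-- A net collection in `L₀′`: a family `(τ_{ij})` with `τ_{ij} ≤ eⱼ`, `τ_{ii} = eᵢ`,
`τ_{ij} ∈ L₀′`, and such that for every `g ∈ G`:
`[g eᵢ]ⱼ ≤ τ_{ij}` for all `i, j` iff `[g τ_{ki}]ⱼ ≤ τ_{kj}` for all `i, j, k`. -/
def IsNetCollection (e : Fin n → L) (G : Subgroup (L ≃o L)) (τ : Fin n → Fin n → L) : Prop :=
  (∀ i j, τ i j ≤ e j) ∧
  (∀ i, τ i i = e i) ∧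
  (∀ i j, τ i j ∈ L0' e G) ∧
  (∀ g ∈ G, (∀ i j, sc e (g (e i)) j ≤ τ i j) ↔
      (∀ i j k, sc e (g (τ k i)) j ≤ τ k j))

/-- The sublattice `K_τ` of `L₀′` generated by `⊥` and the elements `⨆ⱼ τ_{ij}`. -/
def Kτ (τ : Fin n → Fin n → L) : Set L :=
  latClosure ({⊥} ∪ Set.range fun i => (univ : Finset (Fin n)).sup (τ i))

/-- **The conditions 1⁰–11⁰ of the paper** for the data: a modular lattice `L` of finite
length, the atoms `e₁, …, eₙ` of a Boolean sublattice `L₀` with the same `⊥` and `⊤` as `L`,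
a subgroup `G ≤ Aut L`, and the common value `m` of the dimension on the atoms. -/
structure PaperConditions (e : Fin n → L) (G : Subgroup (L ≃o L)) (m : ℕ) : Prop where
  /-- `L₀` is a Boolean algebra with atoms `e₁, …, eₙ`: the atoms are nonzero, -/
  atom_ne_bot : ∀ i, e i ≠ ⊥
  /-- independent (`eᵢ ⊓ êᵢ = ⊥`), -/
  indep : ∀ i, e i ⊓ hatE e i = ⊥
  /-- and (condition `1⁰`) `1_{L₀} = 1_L`, i.e. `⨆ᵢ eᵢ = ⊤` (also `0_{L₀} = 0_L = ⊥`). -/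
  sup_eq_top : (univ : Finset (Fin n)).sup e = ⊤
  /-- Condition `2⁰`: the dimension function is constant, with value `m`, on the atoms. -/
  height_atom : ∀ i, Order.height (e i) = (m : ℕ∞)
  /-- Condition `3⁰`. -/
  c3 : ∀ a ∈ G, ∀ i, sc e ((a : L ≃o L) (e i)) i = e i →
      ∃ h ∈ HiSet e G i, ∀ y, y ≤ e i →
        sc e (h ((a : L ≃o L) y)) i = y ∧ sc e ((a : L ≃o L) (h y)) i = y
  /-- Condition `4⁰`. -/
  c4 : ∀ t i : Fin n, ∃ h, h ∈ HiSet e G t ∧ (∀ z ∈ L0bar e, h z = z) ∧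
      ∀ a ∈ G, ∀ r, r ≠ i → ∀ y, y ≤ e i →
        sc e ((a : L ≃o L) (h ((a : L ≃o L).symm y))) r
          = sc e ((a : L ≃o L) (sc e ((a : L ≃o L).symm y) t)) r
  /-- Condition `5⁰`. -/
  c5 : ∀ u ∈ L0bar e, ∀ i, e i ≤ u → ∀ g ∈ G, sc e ((g : L ≃o L) u) i = e i →
      ∃ t ∈ G, sc e ((g : L ≃o L) ((t : L ≃o L) (e i))) i = e i ∧
        (∀ s, s ≠ i → (t : L ≃o L) (e s) = e s) ∧
        ∀ j, sc e ((t : L ≃o L) (e i)) j ≤ sc e u j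
  /-- Condition `6⁰`. -/
  c6 : ∀ f ∈ G, ∀ g ∈ G, ∀ i j : Fin n,
      sc e ((f : L ≃o L) (e i)) j ≤ sc e ((g : L ≃o L) (e i)) j →
      ∀ x ∈ L0' e G, x ≤ e i → sc e ((f : L ≃o L) x) j ≤ sc e ((g : L ≃o L) x) j
  /-- Condition `7⁰`. -/
  c7 : ∀ j : Fin n, ∀ u, u ≤ e j → ∀ i, i ≠ j →
      ∃ (s : ℕ) (y : Fin s → L), (∀ r, y r ≤ e j) ∧
        u = (univ : Finset (Fin s)).sup y ∧ ∀ r, (Hij e G i j (y r)).Nonempty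
  /-- Condition `8⁰`. -/
  c8 : ∀ f ∈ G, ∀ i j : Fin n, i ≠ j →
      ∃ g ∈ Hij e G i j (sc e ((f : L ≃o L) (e i)) j),
        ∀ u, u ≤ e i → sc e (g u) j = sc e ((f : L ≃o L) u) j
  /-- Condition `9⁰`. -/
  c9 : ∀ i j : Fin n, i ≠ j → ∀ x, x ≤ e j → ∀ w : L,
      Order.height w = (m : ℕ∞) →
      sc e w i = e i → sc e w j = x → (∀ k, k ≠ i → k ≠ j → sc e w k = ⊥) →
      (Hij e G i j x).Nonempty → ∃ t ∈ Hij e G i j x, t w = e i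
  /-- Condition `10⁰`. -/
  c10 : ∀ i j : Fin n, i ≠ j → ∀ (s : ℕ) (xs : Fin s → L) (a : Fin s → (L ≃o L)),
      (∀ r, a r ∈ Hij e G i j (xs r)) →
      ∀ y, y ≤ (univ : Finset (Fin s)).sup xs → (Hij e G i j y).Nonempty →
      Hij e G i j y ⊆ ↑(Subgroup.closure (Hset e G ∪ Set.range a))
  /-- Condition `11⁰`. -/
  c11 : ∀ a ∈ G, ∀ t : Fin n, ∀ i j : Fin n, i ≠ j → ∀ h ∈ HiSet e G t,
      (Hij e G i j (sc e ((a : L ≃o L) (h ((a : L ≃o L).symm (e i)))) j) ∩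
        ↑(Subgroup.closure (insert (a : L ≃o L) (Hset e G)))).Nonempty

section AuxBasic

variable {L : Type*} [CompleteLattice L] {n : ℕ}

lemma autMul_apply (f g : L ≃o L) (x : L) : (f * g) x = f (g x) := rfl

lemma autInv_apply (f : L ≃o L) (x : L) : (f⁻¹ : L ≃o L) x = f.symm x := rfl

lemma autOne_apply (x : L) : (1 : L ≃o L) x = x := rfl

lemma autMap_finsetSup {ι : Type*} [DecidableEq ι] (f : L ≃o L) (s : Finset ι) (v : ι → L) :
    f (s.sup v) = s.sup (fun i => f (v i)) := by
  induction s using Finset.induction_on with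
  | empty => simpa using f.map_bot
  | @insert a s ha ih => rw [Finset.sup_insert, Finset.sup_insert, OrderIso.map_sup, ih]

lemma autFix_of_le [WellFoundedLT L] (f : L ≃o L) {a : L} (h : f a ≤ a) : f a = a := by
  by_contra hne
  have hlt : f a < a := lt_of_le_of_ne h hne
  obtain ⟨b, hb, hmin⟩ := (wellFounded_lt (α := L)).has_min {x | f x < x} ⟨a, hlt⟩
  exact hmin (f b) (f.strictMono hb) hb

lemma sc_le_e (e : Fin n → L) (x : L) (i : Fin n) : sc e x i ≤ e i := inf_le_right

lemma sc_mono (e : Fin n → L) {x y : L} (h : x ≤ y) (i : Fin n) : sc e x i ≤ sc e y i :=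
  inf_le_inf_right _ (sup_le_sup_right h _)

lemma e_le_hatE (e : Fin n → L) {i j : Fin n} (h : i ≠ j) : e i ≤ hatE e j :=
  Finset.le_sup (Finset.mem_erase.2 ⟨h, Finset.mem_univ i⟩)

lemma e_sup_hatE (e : Fin n → L) (htop : (Finset.univ : Finset (Fin n)).sup e = ⊤) (i : Fin n) :
    e i ⊔ hatE e i = ⊤ := by
  rw [← htop]
  conv_rhs => rw [← Finset.insert_erase (Finset.mem_univ i), Finset.sup_insert]
  rfl

variable [IsModularLattice L]

lemma sc_eq_bot (e : Fin n → L) (hind : ∀ i, e i ⊓ hatE e i = ⊥) {x : L} {j : Fin n}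
    (h : x ≤ hatE e j) : sc e x j = ⊥ := by
  unfold sc
  rw [sup_eq_right.2 h, inf_comm]
  exact hind j

lemma sc_eq_self (e : Fin n → L) (hind : ∀ i, e i ⊓ hatE e i = ⊥) {x : L} {j : Fin n}
    (h : x ≤ e j) : sc e x j = x := by
  unfold sc
  rw [sup_inf_assoc_of_le _ h, inf_comm (hatE e j) (e j), hind j, sup_bot_eq]

lemma sc_sup_hat (e : Fin n → L) {c : L} {j : Fin n} (hc : c ≤ hatE e j) (x : L) :
    sc e (x ⊔ c) j = sc e x j := by
  unfold sc
  rw [sup_assoc, sup_eq_right.2 hc]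

lemma le_sup_sc (e : Fin n → L) (htop : (Finset.univ : Finset (Fin n)).sup e = ⊤) (z : L) :
    z ≤ (Finset.univ : Finset (Fin n)).sup (fun j => sc e z j) := by
  classical
  have key : ∀ s : Finset (Fin n),
      z ≤ s.sup (fun j => sc e z j) ⊔ ((Finset.univ : Finset (Fin n)) \ s).sup e := by
    intro s
    induction s using Finset.induction_on with
    | empty => simp [htop]
    | @insert a s ha ih =>
      have hsdiff : (Finset.univ : Finset (Fin n)) \ s
          = insert a ((Finset.univ : Finset (Fin n)) \ insert a s) := by
        rw [Finset.sdiff_insert, Finset.insert_erase]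
        exact Finset.mem_sdiff.2 ⟨Finset.mem_univ a, ha⟩
      set A := s.sup (fun j => sc e z j) with hA
      set B := ((Finset.univ : Finset (Fin n)) \ insert a s).sup e with hB
      have hihe : z ≤ e a ⊔ (A ⊔ B) := by
        have := ih
        rw [hsdiff, Finset.sup_insert] at this
        calc z ≤ A ⊔ (e a ⊔ B) := this
          _ = e a ⊔ (A ⊔ B) := by rw [← sup_assoc, sup_comm A (e a), sup_assoc]
      have hcc : A ⊔ B ≤ hatE e a := by
        apply sup_le
        · exact Finset.sup_le fun j hj =>
            le_trans (sc_le_e e z j) (e_le_hatE e (fun hh => ha (hh ▸ hj)))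
        · exact Finset.sup_le fun j hj => e_le_hatE e
            (fun hh => (Finset.mem_sdiff.1 hj).2 (hh ▸ Finset.mem_insert_self a s))
      have h2 : z ≤ ((z ⊔ (A ⊔ B)) ⊓ e a) ⊔ (A ⊔ B) := by
        rw [inf_sup_assoc_of_le _ (le_sup_right : A ⊔ B ≤ z ⊔ (A ⊔ B))]
        exact le_inf le_sup_left hihe
      have h3 : (z ⊔ (A ⊔ B)) ⊓ e a ≤ sc e z a :=
        inf_le_inf_right _ (sup_le le_sup_left (le_trans hcc le_sup_right))
      calc z ≤ ((z ⊔ (A ⊔ B)) ⊓ e a) ⊔ (A ⊔ B) := h2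
        _ ≤ sc e z a ⊔ (A ⊔ B) := sup_le_sup_right h3 _
        _ = (insert a s).sup (fun j => sc e z j) ⊔ B := by
            rw [Finset.sup_insert, sup_assoc]
  have := key Finset.univ
  simpa using this

lemma disj_pair (e : Fin n → L) (hind : ∀ i, e i ⊓ hatE e i = ⊥) {i j : Fin n} :
    ∀ T : Finset (Fin n), i ∉ T → j ∉ T → (e i ⊔ e j) ⊓ T.sup e = ⊥ := by
  classical
  intro T
  induction T using Finset.induction_on with
  | empty => simp
  | @insert a s ha ih =>
    intro hi hj
    have hai : a ≠ i := fun hh => hi (hh ▸ Finset.mem_insert_self a s)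
    have haj : a ≠ j := fun hh => hj (hh ▸ Finset.mem_insert_self a s)
    have hi' : i ∉ s := fun hh => hi (Finset.mem_insert_of_mem hh)
    have hj' : j ∉ s := fun hh => hj (Finset.mem_insert_of_mem hh)
    rw [Finset.sup_insert]
    set B := s.sup e with hBdef
    have hBa : B ≤ hatE e a := Finset.sup_le fun l hl =>
      e_le_hatE e (fun hh => ha (hh ▸ hl))
    have h1 : (e i ⊔ e j ⊔ B) ⊓ e a = ⊥ := by
      apply le_bot_iff.1
      calc (e i ⊔ e j ⊔ B) ⊓ e a ≤ hatE e a ⊓ e a := by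
            apply inf_le_inf_right
            exact sup_le (sup_le (e_le_hatE e (Ne.symm hai))
              (e_le_hatE e (Ne.symm haj))) hBa
        _ = ⊥ := by rw [inf_comm]; exact hind a
    have h2 : (e i ⊔ e j) ⊓ (e a ⊔ B) ≤ (e i ⊔ e j ⊔ B) ⊓ (e a ⊔ B) :=
      inf_le_inf_right _ le_sup_left
    have h3 : (e i ⊔ e j ⊔ B) ⊓ (e a ⊔ B) = ((e i ⊔ e j ⊔ B) ⊓ e a) ⊔ B :=
      (inf_sup_assoc_of_le _ (le_sup_right : B ≤ e i ⊔ e j ⊔ B)).symm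
    have h4 : (e i ⊔ e j) ⊓ (e a ⊔ B) ≤ B := by
      calc (e i ⊔ e j) ⊓ (e a ⊔ B) ≤ (e i ⊔ e j ⊔ B) ⊓ (e a ⊔ B) := h2
        _ = ((e i ⊔ e j ⊔ B) ⊓ e a) ⊔ B := h3
        _ = B := by rw [h1, bot_sup_eq]
    have h5 : (e i ⊔ e j) ⊓ (e a ⊔ B) ≤ (e i ⊔ e j) ⊓ B :=
      le_inf inf_le_left h4
    exact le_bot_iff.1 (h5.trans_eq (ih hi' hj'))

end AuxBasic
section AuxHeight

variable {L : Type*} [CompleteLattice L] [IsModularLattice L]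

lemma height_le_of_strictMonoOn (a b : L) (φ : L → L) (hab : φ a = b)
    (h : ∀ x y : L, x ≤ a → y ≤ a → x < y → φ x < φ y) :
    Order.height a ≤ Order.height b := by
  rw [Order.height_eq_iSup_last_eq]
  apply iSup₂_le
  intro p hp
  have hle : ∀ k, p k ≤ a := fun k => hp ▸ p.monotone (Fin.le_last k)
  let q : LTSeries L := ⟨p.length, fun k => φ (p k), fun k => h _ _ (hle _) (hle _) (p.step k)⟩
  have hlast : q.last = b := by
    show φ (p (Fin.last _)) = b
    rw [show p (Fin.last _) = a from hp, hab]
  calc (p.length : ℕ∞) = (q.length : ℕ∞) := rfl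
    _ ≤ Order.height q.last := Order.length_le_height_last
    _ = Order.height b := by rw [hlast]

/-- retraction computation used twice below -/
private lemma compl_retract {c y z x : L} (hy1 : y ⊓ c = ⊥) (hz2 : z ⊔ c = ⊤)
    (hx : x ≤ y) : ((x ⊔ c) ⊓ z ⊔ c) ⊓ y = x := by
  rw [inf_sup_assoc_of_le _ (le_sup_right : c ≤ x ⊔ c), hz2, inf_top_eq,
    sup_inf_assoc_of_le _ hx, inf_comm c y, hy1, sup_bot_eq]

private lemma compl_strict {c y z : L} (hy1 : y ⊓ c = ⊥) (hz2 : z ⊔ c = ⊤) :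
    ∀ x₁ x₂ : L, x₁ ≤ y → x₂ ≤ y → x₁ < x₂ → (x₁ ⊔ c) ⊓ z < (x₂ ⊔ c) ⊓ z := by
  intro x₁ x₂ h1 h2 hlt
  refine lt_of_le_of_ne (inf_le_inf_right _ (sup_le_sup_right hlt.le c)) ?_
  intro heq
  have := compl_retract (x := x₁) hy1 hz2 h1
  rw [heq, compl_retract (x := x₂) hy1 hz2 h2] at this
  exact hlt.ne this.symm

lemma height_le_of_compl (c y z : L) (hy1 : y ⊓ c = ⊥) (hy2 : y ⊔ c = ⊤)
    (hz2 : z ⊔ c = ⊤) : Order.height y ≤ Order.height z := by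
  apply height_le_of_strictMonoOn y z (fun t => (t ⊔ c) ⊓ z)
  · rw [hy2, top_inf_eq]
  · exact compl_strict hy1 hz2

lemma height_eq_of_compl (c y z : L) (hz1 : z ⊓ c = ⊥) (hz2 : z ⊔ c = ⊤)
    (hy1 : y ⊓ c = ⊥) (hy2 : y ⊔ c = ⊤) : Order.height z = Order.height y :=
  le_antisymm (height_le_of_compl c z y hz1 hz2 hy2) (height_le_of_compl c y z hy1 hy2 hz2)

lemma inf_compl_bot (c y z : L) (hy1 : y ⊓ c = ⊥) (hy2 : y ⊔ c = ⊤) (hz2 : z ⊔ c = ⊤)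
    {m : ℕ} (hym : Order.height y = (m : ℕ∞)) (hzm : Order.height z = (m : ℕ∞)) :
    z ⊓ c = ⊥ := by
  by_contra hne
  obtain ⟨p, hp, hplen⟩ := Order.exists_series_of_height_eq_coe y hym
  have hle : ∀ k, p k ≤ y := fun k => hp ▸ p.monotone (Fin.le_last k)
  let q : LTSeries L := ⟨p.length, fun k => (p k ⊔ c) ⊓ z,
    fun k => compl_strict hy1 hz2 _ _ (hle _) (hle _) (p.step k)⟩
  have hhead : (⊥ : L) < q.head := by
    refine lt_of_lt_of_le (bot_lt_iff_ne_bot.2 hne) ?_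
    show z ⊓ c ≤ (p 0 ⊔ c) ⊓ z
    rw [inf_comm]
    exact inf_le_inf_right z le_sup_right
  let r := q.cons ⊥ hhead
  have hrlast : r.last = z := by
    rw [RelSeries.last_cons]
    show (p (Fin.last _) ⊔ c) ⊓ z = z
    rw [show p (Fin.last _) = y from hp, hy2, top_inf_eq]
  have hlen : r.length = m + 1 := by
    show (RelSeries.cons q ⊥ hhead).length = m + 1
    rw [RelSeries.cons_length]
    show q.length + 1 = m + 1
    rw [show q.length = m from hplen]
  have h2 := Order.length_le_height_last (p := r)
  rw [hrlast, hzm, hlen] at h2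
  have : (m + 1 : ℕ) ≤ m := by exact_mod_cast h2
  omega

end AuxHeight
section AuxNet

variable {L : Type*} [CompleteLattice L] [IsModularLattice L] {n : ℕ}

/-- The generating set of Theorem 7.2. -/
def netGen (e : Fin n → L) (G : Subgroup (L ≃o L)) (τ : Fin n → Fin n → L) : Set (L ≃o L) :=
  Hset e G ∪ {f : L ≃o L | ∃ i j, i ≠ j ∧ ∃ x ≤ τ i j, f ∈ Hij e G i j x}

lemma tauRow_mem_Kτ (τ : Fin n → Fin n → L) (i : Fin n) :
    (Finset.univ : Finset (Fin n)).sup (τ i) ∈ Kτ τ :=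
  Set.mem_sInter.2 fun _ hT => hT.1 (Or.inr ⟨i, rfl⟩)

lemma sc_tauRow (e : Fin n → L) (hind : ∀ i, e i ⊓ hatE e i = ⊥)
    (τ : Fin n → Fin n → L) (hle : ∀ i j, τ i j ≤ e j) (i j : Fin n) :
    sc e ((Finset.univ : Finset (Fin n)).sup (τ i)) j = τ i j := by
  have h1 : (Finset.univ : Finset (Fin n)).sup (τ i) ⊔ hatE e j = τ i j ⊔ hatE e j := by
    apply le_antisymm
    · refine sup_le (Finset.sup_le fun j' _ => ?_) le_sup_right
      rcases eq_or_ne j' j with rfl | hne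
      · exact le_sup_left
      · exact le_trans (le_trans (hle i j') (e_le_hatE e hne)) le_sup_right
    · exact sup_le_sup_right (Finset.le_sup (Finset.mem_univ j)) _
  show ((Finset.univ : Finset (Fin n)).sup (τ i) ⊔ hatE e j) ⊓ e j = τ i j
  rw [h1]
  exact sc_eq_self e hind (hle i j)

variable (e : Fin n → L) (G : Subgroup (L ≃o L)) (τ : Fin n → Fin n → L)

lemma e_le_tauRow (hdiag : ∀ i, τ i i = e i) (i : Fin n) :
    e i ≤ (Finset.univ : Finset (Fin n)).sup (τ i) := by
  rw [← hdiag i]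
  exact Finset.le_sup (Finset.mem_univ i)

lemma mem_GFix_iff [WellFoundedLT L] (hind : ∀ i, e i ⊓ hatE e i = ⊥)
    (htop : (Finset.univ : Finset (Fin n)).sup e = ⊤)
    (hle : ∀ i j, τ i j ≤ e j) (hdiag : ∀ i, τ i i = e i)
    (hnet : ∀ g ∈ G, (∀ i j, sc e (g (e i)) j ≤ τ i j) ↔
      (∀ i j k, sc e (g (τ k i)) j ≤ τ k j)) (g : L ≃o L) :
    g ∈ GFix G (Kτ τ) ↔ g ∈ G ∧ ∀ i j, sc e (g (e i)) j ≤ τ i j := by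
  constructor
  · intro h
    refine ⟨h.1, fun i j => ?_⟩
    have h1 : g (e i) ≤ g ((Finset.univ : Finset (Fin n)).sup (τ i)) :=
      g.monotone (e_le_tauRow e τ hdiag i)
    have h2 : g ((Finset.univ : Finset (Fin n)).sup (τ i))
        = (Finset.univ : Finset (Fin n)).sup (τ i) := h.2 _ (tauRow_mem_Kτ τ i)
    calc sc e (g (e i)) j ≤ sc e ((Finset.univ : Finset (Fin n)).sup (τ i)) j :=
          sc_mono e (h1.trans h2.le) j
      _ = τ i j := sc_tauRow e hind τ hle i j
  · rintro ⟨hg, hA⟩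
    have hB := (hnet g hg).1 hA
    have hfix : ∀ k, g ((Finset.univ : Finset (Fin n)).sup (τ k))
        = (Finset.univ : Finset (Fin n)).sup (τ k) := by
      intro k
      apply autFix_of_le
      rw [autMap_finsetSup]
      apply Finset.sup_le
      intro i' _
      calc g (τ k i') ≤ (Finset.univ : Finset (Fin n)).sup (fun j => sc e (g (τ k i')) j) :=
            le_sup_sc e htop _
        _ ≤ (Finset.univ : Finset (Fin n)).sup (τ k) :=
            Finset.sup_le fun j _ => le_trans (hB i' j k) (Finset.le_sup (Finset.mem_univ j))
    refine ⟨hg, fun x hx => ?_⟩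
    refine Set.mem_sInter.1 hx {y | g y = y} ⟨?_, ?_⟩
    · rintro y (rfl | ⟨k, rfl⟩)
      · exact g.map_bot
      · exact hfix k
    · intro a ha b hb
      refine ⟨?_, ?_⟩
      · show g (a ⊔ b) = a ⊔ b
        rw [OrderIso.map_sup, ha, hb]
      · show g (a ⊓ b) = a ⊓ b
        rw [OrderIso.map_inf, ha, hb]

/-- `G(K_τ)` as a subgroup. -/
def GFixSub : Subgroup (L ≃o L) where
  carrier := GFix G (Kτ τ)
  one_mem' := ⟨G.one_mem, fun _ _ => rfl⟩
  mul_mem' := fun ha hb => ⟨G.mul_mem ha.1 hb.1,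
    fun x hx => by rw [autMul_apply, hb.2 x hx, ha.2 x hx]⟩
  inv_mem' := fun {g} ha => ⟨G.inv_mem ha.1, fun x hx => by
    show g.symm x = x
    exact (OrderIso.symm_apply_eq g).2 (ha.2 x hx).symm⟩

lemma condA_of_fix (hind : ∀ i, e i ⊓ hatE e i = ⊥) (hdiag : ∀ i, τ i i = e i)
    {g : L ≃o L} {i : Fin n} (h : g (e i) = e i) (j : Fin n) :
    sc e (g (e i)) j ≤ τ i j := by
  rw [h]
  rcases eq_or_ne i j with rfl | hne
  · rw [show sc e (e i) i = e i from inf_eq_right.2 le_sup_left, hdiag i]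
  · rw [sc_eq_bot e hind (e_le_hatE e hne)]
    exact bot_le

lemma closure_le_GFixSub [WellFoundedLT L] (hind : ∀ i, e i ⊓ hatE e i = ⊥)
    (htop : (Finset.univ : Finset (Fin n)).sup e = ⊤)
    (hle : ∀ i j, τ i j ≤ e j) (hdiag : ∀ i, τ i i = e i)
    (hnet : ∀ g ∈ G, (∀ i j, sc e (g (e i)) j ≤ τ i j) ↔
      (∀ i j k, sc e (g (τ k i)) j ≤ τ k j)) :
    Subgroup.closure (netGen e G τ) ≤ GFixSub G τ := by
  apply (Subgroup.closure_le _).2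
  rintro f (hf | ⟨i, j, hij, x, hx, hfH⟩)
  · exact (mem_GFix_iff e G τ hind htop hle hdiag hnet f).2
      ⟨hf.1, fun i j => condA_of_fix e τ hind hdiag (hf.2 i) j⟩
  · obtain ⟨hfG, h1, _h2, h3, h4, h5⟩ := hfH
    refine (mem_GFix_iff e G τ hind htop hle hdiag hnet f).2 ⟨hfG, ?_⟩
    intro i' j'
    rcases eq_or_ne i' i with rfl | hne
    · rcases eq_or_ne j' i' with rfl | hj'i
      · rw [h4, hdiag j']
      · rcases eq_or_ne j' j with rfl | hj'j
        · rw [h5]; exact hx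
        · rw [h3 j' hj'i hj'j]; exact bot_le
    · exact condA_of_fix e τ hind hdiag (h1 i' hne (e i') le_rfl) j'

end AuxNet
section AuxClaimC

variable {L : Type*} [CompleteLattice L] [IsModularLattice L] [WellFoundedLT L] {n : ℕ}
variable (e : Fin n → L) (G : Subgroup (L ≃o L)) {m : ℕ} (τ : Fin n → Fin n → L)

lemma claimC_empty (hc : PaperConditions e G m) (i : Fin n) (b : L ≃o L)
    (hempty : ∀ l, l ≠ i → sc e (b (e i)) l = ⊥) :
    b (e i) = e i := by
  have hle : b (e i) ≤ e i := by
    refine le_trans (le_sup_sc e hc.sup_eq_top _) (Finset.sup_le fun l _ => ?_)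
    rcases eq_or_ne l i with rfl | hne
    · exact sc_le_e e _ l
    · rw [hempty l hne]; exact bot_le
  by_contra hne
  have hlt : b (e i) < e i := lt_of_le_of_ne hle hne
  have hfin : Order.height (b (e i)) < ⊤ := by
    rw [Order.height_orderIso, hc.height_atom i]
    exact ENat.coe_lt_top m
  have hh := Order.height_strictMono hlt hfin
  rw [Order.height_orderIso] at hh
  exact lt_irrefl _ hh

lemma claimC (hc : PaperConditions e G m) (hble0 : ∀ i j, τ i j ≤ e j)
    (hdiag : ∀ i, τ i i = e i) (i : Fin n) :
    ∀ (N : ℕ) (b : L ≃o L), b ∈ G →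
      (∀ l, sc e (b (e i)) l ≤ τ i l) → sc e (b (e i)) i = e i →
      (∃ S : Finset (Fin n), S.card ≤ N ∧ ∀ l, l ≠ i → l ∉ S → sc e (b (e i)) l = ⊥) →
      ∃ c : L ≃o L, c ∈ Subgroup.closure (netGen e G τ) ∧
        (∀ s, s ≠ i → c (e s) = e s) ∧ c (b (e i)) = e i := by
  intro N
  induction N with
  | zero =>
    intro b hb hble hbi hsupp
    obtain ⟨S, hcard, hS⟩ := hsupp
    have hSempty : S = ∅ := Finset.card_eq_zero.1 (Nat.le_zero.1 hcard)
    have hemp : ∀ l, l ≠ i → sc e (b (e i)) l = ⊥ := fun l hl =>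
      hS l hl (by simp [hSempty])
    exact ⟨1, Subgroup.one_mem _, fun s _ => rfl, by
      rw [autOne_apply]; exact claimC_empty e G hc i b hemp⟩
  | succ N ih =>
    intro b hb hble hbi hsupp
    obtain ⟨S, hcard, hS⟩ := hsupp
    by_cases hall : ∀ l, l ≠ i → sc e (b (e i)) l = ⊥
    · exact ⟨1, Subgroup.one_mem _, fun s _ => rfl, by
        rw [autOne_apply]; exact claimC_empty e G hc i b hall⟩
    push_neg at hall
    obtain ⟨j, hji, hjne⟩ := hall
    have hij : i ≠ j := Ne.symm hji
    have hjS : j ∈ S := by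
      by_contra hj
      exact hjne (hS j hji hj)
    set w := b (e i) with hw
    set T : Finset (Fin n) := (Finset.univ.erase i).erase j with hT
    set C := T.sup (fun l => sc e w l) with hC
    have hmemT : ∀ l, l ≠ i → l ≠ j → l ∈ T := fun l hli hlj =>
      Finset.mem_erase.2 ⟨hlj, Finset.mem_erase.2 ⟨hli, Finset.mem_univ l⟩⟩
    have hTne : ∀ l ∈ T, l ≠ i ∧ l ≠ j := fun l hl =>
      ⟨(Finset.mem_erase.1 (Finset.mem_erase.1 hl).2).1, (Finset.mem_erase.1 hl).1⟩
    have hiT : i ∉ T := fun h => (hTne i h).1 rfl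
    have hjT : j ∉ T := fun h => (hTne j h).2 rfl
    have hCi : C ≤ hatE e i := Finset.sup_le fun l hl =>
      le_trans (sc_le_e e w l) (e_le_hatE e (hTne l hl).1)
    have hCj : C ≤ hatE e j := Finset.sup_le fun l hl =>
      le_trans (sc_le_e e w l) (e_le_hatE e (hTne l hl).2)
    have hCE : C ≤ T.sup e := Finset.sup_le fun l hl =>
      le_trans (sc_le_e e w l) (Finset.le_sup hl)
    have hwsup : w ≤ e i ⊔ e j ⊔ C := by
      refine le_trans (le_sup_sc e hc.sup_eq_top w) (Finset.sup_le fun l _ => ?_)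
      rcases eq_or_ne l i with rfl | hli
      · rw [hbi]
        exact le_sup_of_le_left le_sup_left
      rcases eq_or_ne l j with rfl | hlj
      · exact le_sup_of_le_left (le_sup_of_le_right (sc_le_e e w l))
      · exact le_sup_of_le_right (Finset.le_sup (hmemT l hli hlj))
    set w'' := (w ⊔ C) ⊓ (e i ⊔ e j) with hw''
    have hw''C : w ≤ w'' ⊔ C := by
      have h1 : w'' ⊔ C = (w ⊔ C) ⊓ (e i ⊔ e j ⊔ C) :=
        inf_sup_assoc_of_le _ (le_sup_right : C ≤ w ⊔ C)
      rw [h1]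
      exact le_inf le_sup_left hwsup
    have hei_le : e i ≤ w ⊔ hatE e i := le_trans (le_of_eq hbi.symm) inf_le_left
    have h''top : e i ≤ w'' ⊔ hatE e i :=
      le_trans hei_le (sup_le (le_trans hw''C
        (sup_le le_sup_left (hCi.trans le_sup_right))) le_sup_right)
    have h''i : sc e w'' i = e i := inf_eq_right.2 h''top
    have h''j : sc e w'' j = sc e w j := by
      apply le_antisymm
      · calc sc e w'' j ≤ sc e (w ⊔ C) j := sc_mono e inf_le_left j
          _ = sc e w j := sc_sup_hat e hCj w
      · refine le_inf ?_ (sc_le_e e w j)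
        calc sc e w j ≤ w ⊔ hatE e j := inf_le_left
          _ ≤ w'' ⊔ hatE e j := sup_le (hw''C.trans
              (sup_le le_sup_left (hCj.trans le_sup_right))) le_sup_right
    have h''k : ∀ k, k ≠ i → k ≠ j → sc e w'' k = ⊥ := fun k hki hkj =>
      sc_eq_bot e hc.indep (le_trans inf_le_right
        (sup_le (e_le_hatE e (Ne.symm hki)) (e_le_hatE e (Ne.symm hkj))))
    have hwtop : w ⊔ hatE e i = ⊤ := by
      apply le_antisymm le_top
      rw [← e_sup_hatE e hc.sup_eq_top i]
      exact sup_le hei_le le_sup_right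
    have hwm : Order.height w = (m : ℕ∞) := by
      rw [hw, Order.height_orderIso]; exact hc.height_atom i
    have hwbot : w ⊓ hatE e i = ⊥ :=
      inf_compl_bot (hatE e i) (e i) w (hc.indep i) (e_sup_hatE e hc.sup_eq_top i)
        hwtop (hc.height_atom i) hwm
    have h1C : (w ⊔ C) ⊓ hatE e i = C := by
      rw [sup_comm w C, sup_inf_assoc_of_le _ hCi, hwbot, sup_bot_eq]
    have h''bot : w'' ⊓ hatE e i = ⊥ := by
      apply le_bot_iff.1
      calc w'' ⊓ hatE e i = ((w ⊔ C) ⊓ hatE e i) ⊓ (e i ⊔ e j) := by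
            rw [hw'', inf_right_comm]
        _ = C ⊓ (e i ⊔ e j) := by rw [h1C]
        _ ≤ T.sup e ⊓ (e i ⊔ e j) := inf_le_inf_right _ hCE
        _ = (e i ⊔ e j) ⊓ T.sup e := inf_comm _ _
        _ = ⊥ := disj_pair e hc.indep T hiT hjT
    have h''sup : w'' ⊔ hatE e i = ⊤ := by
      apply le_antisymm le_top
      rw [← e_sup_hatE e hc.sup_eq_top i]
      exact sup_le h''top le_sup_right
    have h''m : Order.height w'' = (m : ℕ∞) := by
      rw [← hc.height_atom i]
      exact height_eq_of_compl (hatE e i) (e i) w'' h''bot h''sup (hc.indep i)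
        (e_sup_hatE e hc.sup_eq_top i)
    have hne9 : (Hij e G i j (sc e w j)).Nonempty := by
      obtain ⟨g', hg', _⟩ := hc.c8 b hb i j hij
      exact ⟨g', hg'⟩
    obtain ⟨t, htH, htw''⟩ :=
      hc.c9 i j hij (sc e w j) (sc_le_e e w j) w'' h''m h''i h''j h''k hne9
    have htG := htH.1
    have ht1 := htH.2.1
    have htC : t C = C := by
      rw [hC, autMap_finsetSup]
      exact Finset.sup_congr rfl fun l hl => ht1 l (hTne l hl).1 _ (sc_le_e e w l)
    have htwle : t w ≤ e i ⊔ C := by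
      calc t w ≤ t (w'' ⊔ C) := t.monotone (hw''C)
        _ = e i ⊔ C := by rw [OrderIso.map_sup, htw'', htC]
    have hb'i : sc e (t w) i = e i := by
      apply inf_eq_right.2
      calc e i = t w'' := htw''.symm
        _ ≤ t (w ⊔ C) := t.monotone inf_le_left
        _ = t w ⊔ C := by rw [OrderIso.map_sup, htC]
        _ ≤ t w ⊔ hatE e i := sup_le_sup_left hCi _
    have hb'j : sc e (t w) j = ⊥ :=
      sc_eq_bot e hc.indep (le_trans htwle (sup_le (e_le_hatE e hij) hCj))
    have hb'l : ∀ l, l ≠ i → l ≠ j → sc e (t w) l ≤ sc e w l := by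
      intro l hli hlj
      have h1 : e i ⊔ C ≤ sc e w l ⊔ hatE e l := by
        apply sup_le (le_trans (e_le_hatE e (Ne.symm hli)) le_sup_right)
        refine Finset.sup_le fun l' hl' => ?_
        rcases eq_or_ne l' l with rfl | hne'
        · exact le_sup_left
        · exact le_trans (le_trans (sc_le_e e w l') (e_le_hatE e hne')) le_sup_right
      calc sc e (t w) l ≤ sc e (e i ⊔ C) l := sc_mono e htwle l
        _ ≤ (sc e w l ⊔ hatE e l) ⊓ e l := inf_le_inf_right _ (sup_le h1 le_sup_right)
        _ = sc e w l := sc_eq_self e hc.indep (sc_le_e e w l)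
    have hb'le : ∀ l, sc e (t w) l ≤ τ i l := by
      intro l
      rcases eq_or_ne l i with rfl | hli
      · rw [hb'i, hdiag l]
      rcases eq_or_ne l j with rfl | hlj
      · rw [hb'j]; exact bot_le
      · exact le_trans (hb'l l hli hlj) (hble l)
    have hb'G : t * b ∈ G := G.mul_mem htG hb
    have hsupp' : ∃ S' : Finset (Fin n), S'.card ≤ N ∧
        ∀ l, l ≠ i → l ∉ S' → sc e ((t*b) (e i)) l = ⊥ := by
      refine ⟨S.erase j, ?_, ?_⟩
      · have := Finset.card_erase_of_mem hjS
        have h2 := Finset.card_pos.2 ⟨j, hjS⟩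
        omega
      · intro l hli hlS
        have hwl : (t*b) (e i) = t w := rfl
        rcases eq_or_ne l j with rfl | hlj
        · rw [hwl]; exact hb'j
        · have hlS' : l ∉ S := fun hh => hlS (Finset.mem_erase.2 ⟨hlj, hh⟩)
          rw [hwl]
          exact le_bot_iff.1 ((hb'l l hli hlj).trans_eq (hS l hli hlS'))
    obtain ⟨c', hc'cl, hc'fix, hc'w⟩ := ih (t*b) hb'G (fun l => hb'le l) hb'i hsupp'
    refine ⟨c' * t, Subgroup.mul_mem _ hc'cl (Subgroup.subset_closure
      (Or.inr ⟨i, j, hij, sc e w j, hble j, htH⟩)), ?_, ?_⟩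
    · intro s hs
      rw [autMul_apply, ht1 s hs (e s) le_rfl, hc'fix s hs]
    · show c' (t (b (e i))) = e i
      exact hc'w

end AuxClaimC
section AuxMainNet

variable {L : Type*} [CompleteLattice L] [IsModularLattice L] [WellFoundedLT L] {n : ℕ}
variable (e : Fin n → L) (G : Subgroup (L ≃o L)) {m : ℕ} (τ : Fin n → Fin n → L)

lemma main_net (hc : PaperConditions e G m) (hτ : IsNetCollection e G τ) :
    ∀ (N : ℕ) (g : L ≃o L), g ∈ G → (∀ i j, sc e (g (e i)) j ≤ τ i j) →
      (∃ S : Finset (Fin n), S.card ≤ N ∧ ∀ s, s ∉ S → g (e s) = e s) →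
      g ∈ Subgroup.closure (netGen e G τ) := by
  intro N
  induction N with
  | zero =>
    intro g hg _hA hsupp
    obtain ⟨S, hcard, hS⟩ := hsupp
    have hSempty : S = ∅ := Finset.card_eq_zero.1 (Nat.le_zero.1 hcard)
    exact Subgroup.subset_closure (Or.inl ⟨hg, fun s => hS s (by simp [hSempty])⟩)
  | succ N ih =>
    intro g hg hA hsupp
    obtain ⟨S, hcard, hS⟩ := hsupp
    by_cases hfix : ∀ s, g (e s) = e s
    · exact Subgroup.subset_closure (Or.inl ⟨hg, hfix⟩)
    push_neg at hfix
    obtain ⟨i, hi⟩ := hfix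
    by_cases hone : ∀ s, s ≠ i → g (e s) = e s
    · -- single unfixed column
      have hhat : g (hatE e i) = hatE e i := by
        show g (((Finset.univ : Finset (Fin n)).erase i).sup e) = _
        rw [autMap_finsetSup]
        exact Finset.sup_congr rfl fun s hs => hone s (Finset.mem_erase.1 hs).1
      have htop2 : g (e i) ⊔ hatE e i = ⊤ := by
        conv_lhs => rw [← hhat, ← OrderIso.map_sup]
        rw [e_sup_hatE e hc.sup_eq_top i, OrderIso.map_top]
      have hgi : sc e (g (e i)) i = e i := inf_eq_right.2 (by rw [htop2]; exact le_top)
      obtain ⟨c, hccl, hcfix, hcw⟩ := claimC e G τ hc hτ.1 hτ.2.1 i n g hg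
        (fun l => hA i l) hgi
        ⟨Finset.univ, by simp, fun l _ hl => absurd (Finset.mem_univ l) hl⟩
      have hcG : c ∈ G :=
        (closure_le_GFixSub e G τ hc.indep hc.sup_eq_top hτ.1 hτ.2.1 hτ.2.2.2 hccl).1
      have hcgH : c * g ∈ Hset e G := by
        refine ⟨G.mul_mem hcG hg, fun s => ?_⟩
        rcases eq_or_ne s i with rfl | hs
        · exact hcw
        · show c (g (e s)) = e s
          rw [hone s hs, hcfix s hs]
      have hg' : g = c⁻¹ * (c * g) := (inv_mul_cancel_left c g).symm
      rw [hg']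
      exact Subgroup.mul_mem _ (Subgroup.inv_mem _ hccl)
        (Subgroup.subset_closure (Or.inl hcgH))
    · -- at least two unfixed columns
      push_neg at hone
      obtain ⟨s₀, hs₀i, hs₀⟩ := hone
      have hiS : i ∈ S := by by_contra h; exact hi (hS i h)
      have hs₀S : s₀ ∈ S := by by_contra h; exact hs₀ (hS s₀ h)
      have hN1 : 1 ≤ N := by
        have h2 : ({i, s₀} : Finset (Fin n)) ⊆ S := by
          intro x hx
          rcases Finset.mem_insert.1 hx with rfl | hx'
          · exact hiS
          · rw [Finset.mem_singleton.1 hx']; exact hs₀S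
        have h3 : ({i, s₀} : Finset (Fin n)).card = 2 := Finset.card_pair (Ne.symm hs₀i)
        have h4 := Finset.card_le_card h2
        omega
      have hgGFix : g ∈ GFix G (Kτ τ) :=
        (mem_GFix_iff e G τ hc.indep hc.sup_eq_top hτ.1 hτ.2.1 hτ.2.2.2 g).2 ⟨hg, hA⟩
      have huL0 : (Finset.univ : Finset (Fin n)).sup (τ i) ∈ L0bar e :=
        ⟨τ i, fun j => hτ.1 i j, rfl⟩
      have hgu : sc e (g ((Finset.univ : Finset (Fin n)).sup (τ i))) i = e i := by
        rw [hgGFix.2 _ (tauRow_mem_Kτ τ i), sc_tauRow e hc.indep τ hτ.1 i i, hτ.2.1 i]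
      obtain ⟨t, htG, ht1, ht2, ht3⟩ :=
        hc.c5 _ huL0 i (e_le_tauRow e τ hτ.2.1 i) g hg hgu
      have hAt : ∀ i' j', sc e (t (e i')) j' ≤ τ i' j' := by
        intro i' j'
        rcases eq_or_ne i' i with rfl | hne
        · exact le_trans (ht3 j') (le_of_eq (sc_tauRow e hc.indep τ hτ.1 i' j'))
        · exact condA_of_fix e τ hc.indep hτ.2.1 (ht2 i' hne) j'
      have htGFix : t ∈ GFix G (Kτ τ) :=
        (mem_GFix_iff e G τ hc.indep hc.sup_eq_top hτ.1 hτ.2.1 hτ.2.2.2 t).2 ⟨htG, hAt⟩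
      have hbGFix : g * t ∈ GFix G (Kτ τ) := (GFixSub G τ).mul_mem hgGFix htGFix
      have hbG : g * t ∈ G := hbGFix.1
      have hAb : ∀ i' j', sc e ((g * t) (e i')) j' ≤ τ i' j' :=
        ((mem_GFix_iff e G τ hc.indep hc.sup_eq_top hτ.1 hτ.2.1 hτ.2.2.2 (g * t)).1 hbGFix).2
      have hbi : sc e ((g * t) (e i)) i = e i := ht1
      obtain ⟨c, hccl, hcfix, hcw⟩ := claimC e G τ hc hτ.1 hτ.2.1 i n (g * t) hbG
        (fun l => hAb i l) hbi
        ⟨Finset.univ, by simp, fun l _ hl => absurd (Finset.mem_univ l) hl⟩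
      have htcl : t ∈ Subgroup.closure (netGen e G τ) := by
        apply ih t htG hAt
        refine ⟨{i}, by simpa using hN1, fun s hs => ?_⟩
        exact ht2 s (by simpa using hs)
      have hcGFix : c ∈ GFix G (Kτ τ) :=
        closure_le_GFixSub e G τ hc.indep hc.sup_eq_top hτ.1 hτ.2.1 hτ.2.2.2 hccl
      have hg'GFix : c * (g * t) ∈ GFix G (Kτ τ) := (GFixSub G τ).mul_mem hcGFix hbGFix
      have hA' : ∀ i' j', sc e ((c * (g * t)) (e i')) j' ≤ τ i' j' :=
        ((mem_GFix_iff e G τ hc.indep hc.sup_eq_top hτ.1 hτ.2.1 hτ.2.2.2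
          (c * (g * t))).1 hg'GFix).2
      have hg'cl : c * (g * t) ∈ Subgroup.closure (netGen e G τ) := by
        apply ih _ hg'GFix.1 hA'
        refine ⟨S.erase i, ?_, ?_⟩
        · have h5 := Finset.card_erase_of_mem hiS
          have h6 := Finset.card_pos.2 ⟨i, hiS⟩
          omega
        · intro s hs
          rcases eq_or_ne s i with rfl | hsne
          · show c ((g * t) (e s)) = e s
            exact hcw
          · have hsS : s ∉ S := fun hh => hs (Finset.mem_erase.2 ⟨hsne, hh⟩)
            show c (g (t (e s))) = e s
            rw [ht2 s hsne, hS s hsS, hcfix s hsne]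
      have hgeq : g = c⁻¹ * (c * (g * t)) * t⁻¹ := by group
      rw [hgeq]
      exact Subgroup.mul_mem _ (Subgroup.mul_mem _ (Subgroup.inv_mem _ hccl) hg'cl)
        (Subgroup.inv_mem _ htcl)

end AuxMainNet
/-- **Theorem 7.2.** In the setting of the paper (modular lattice `L` of finite length,
Boolean sublattice `L₀` with atoms `e₁, …, eₙ`, `G ≤ Aut L`, `H = G(L₀)`, conditions
`1⁰`–`11⁰`): for every net collection `τ = (τ_{ij})` in `L₀′`, with `K_τ` the sublattice of
`L₀′` generated by `⊥` and the elements `⨆ⱼ τ_{ij}`,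
`G(K_τ) = ⟨H, H_{ij}(x) : x ≤ τ_{ij}, i ≠ j⟩`. -/
theorem GFix_Kτ_eq_closure {L : Type*} [CompleteLattice L] [IsModularLattice L]
    [WellFoundedLT L] [WellFoundedGT L] {n : ℕ} (e : Fin n → L)
    (G : Subgroup (L ≃o L)) (m : ℕ)
    (hc : PaperConditions e G m)
    (τ : Fin n → Fin n → L) (hτ : IsNetCollection e G τ) :
    GFix G (Kτ τ) =
      ↑(Subgroup.closure
        (Hset e G ∪ {f : L ≃o L | ∃ i j, i ≠ j ∧ ∃ x ≤ τ i j, f ∈ Hij e G i j x})) := by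
  ext f
  constructor
  · intro hf
    have h1 := (mem_GFix_iff e G τ hc.indep hc.sup_eq_top hτ.1 hτ.2.1 hτ.2.2.2 f).1 hf
    have h2 : f ∈ Subgroup.closure (netGen e G τ) :=
      main_net e G τ hc hτ n f h1.1 h1.2
        ⟨Finset.univ, by simp, fun s hs => absurd (Finset.mem_univ s) hs⟩
    exact SetLike.mem_coe.2 h2
  · intro hf
    exact closure_le_GFixSub e G τ hc.indep hc.sup_eq_top hτ.1 hτ.2.1 hτ.2.2.2
      (SetLike.mem_coe.1 hf)
end

section
/- If (τ^α)_{α∈I} is a family of net collections in L₀′, then the componentwise meet τ′ with τ′_{ij} = ∏_{α∈I} τ^α_{ij} is also a net collection in L₀′. -/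
open Finset

variable {L : Type*} [CompleteLattice L] {n : ℕ}

/-- **Lemma 7.1.** If `(τ^α)_{α ∈ I}` is a family of net collections in `L₀′`, then the
componentwise meet `τ′`, `τ′_{ij} = ⨅_α τ^α_{ij}`, is also a net collection in `L₀′`. -/
theorem iInf_isNetCollection {L : Type*} [CompleteLattice L] [IsModularLattice L]
    [WellFoundedLT L] [WellFoundedGT L] {n : ℕ} (e : Fin n → L)
    (G : Subgroup (L ≃o L))
    {I : Type*} [Nonempty I] (τ : I → Fin n → Fin n → L)
    (hτ : ∀ α, IsNetCollection e G (τ α)) :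
    IsNetCollection e G (fun i j => ⨅ α, τ α i j) := by
  obtain ⟨α₀⟩ := ‹Nonempty I›
  refine ⟨fun i j => ?_, fun i => ?_, fun i j => ?_, fun g hg => ?_⟩
  · exact le_trans (iInf_le _ α₀) ((hτ α₀).1 i j)
  · simp only [(fun α => (hτ α).2.1 i)]
    exact iInf_const
  · intro h hh
    rw [h.map_iInf]
    exact iInf_congr fun α => (hτ α).2.2.1 i j h hh
  · constructor
    · intro hle i j k
      refine le_iInf fun α => ?_
      have h1 : ∀ i j, sc e (g (e i)) j ≤ τ α i j := fun i j =>
        le_trans (hle i j) (iInf_le _ α)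
      have h2 := ((hτ α).2.2.2 g hg).mp h1 i j k
      refine le_trans ?_ h2
      exact inf_le_inf_right _ (sup_le_sup_right (g.monotone (iInf_le _ α)) _)
    · intro hle i j
      have := hle i j i
      simpa [(fun α => (hτ α).2.1 i), iInf_const] using this
end

section
/- In the setting of the paper, with conditions 1⁰–11⁰, fix x ∈ L̄₀ ∩ L₀′ and indices i, j, and let τ_{ij}(x) be the maximal element of e_j satisfying condition (△). If g ∈ G satisfies [g(x_i)]_j ≤ x_j, then [g(e_i)]_j ≤ τ_{ij}(x). -/
open Finset

variable {L : Type*} [CompleteLattice L] {n : ℕ}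

/-- **Lemma 10.3.** In the setting of the paper with conditions `1⁰`–`11⁰`, fix
`x ∈ L̄₀ ∩ L₀′` (with components `x_k = [x]_k`) and indices `i ≠ j`, and let `τ_{ij}(x)` be
the maximal element `u ≤ eⱼ` satisfying condition `(△)` (i.e. for all `f ∈ G`,
`[f eᵢ]ⱼ ≤ u` implies `[f xᵢ]ⱼ ≤ xⱼ`). If `g ∈ G` satisfies `[g xᵢ]ⱼ ≤ xⱼ`, then
`[g eᵢ]ⱼ ≤ τ_{ij}(x)`. -/
theorem support_le_tau_of_fixes {L : Type*} [CompleteLattice L] [IsModularLattice L]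
    [WellFoundedLT L] [WellFoundedGT L] {n : ℕ} (e : Fin n → L)
    (G : Subgroup (L ≃o L)) (m : ℕ)
    (hc : PaperConditions e G m)
    (x : L) (hx : x ∈ L0bar e ∩ L0' e G) (i j : Fin n) (hij : i ≠ j)
    (τij : L)
    (hτ : IsGreatest {u | u ≤ e j ∧ ∀ f ∈ G, sc e ((f : L ≃o L) (e i)) j ≤ u →
            sc e ((f : L ≃o L) (sc e x i)) j ≤ sc e x j} τij)
    (g : L ≃o L) (hg : g ∈ G)
    (hgx : sc e (g (sc e x i)) j ≤ sc e x j) :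
    sc e (g (e i)) j ≤ τij := by
  refine hτ.2 ⟨inf_le_right, fun f hf hfle => ?_⟩
  have hxi_mem : sc e x i ∈ L0' e G := by
    intro h hh
    have hx' : h x = x := hx.2 h hh
    have hhat : h (hatE e i) = hatE e i := by
      unfold hatE
      rw [Finset.comp_sup_eq_sup_comp (g := h) (fun a b => h.map_sup a b) h.map_bot]
      exact Finset.sup_congr rfl fun k _ => hh.2 k
    show h ((x ⊔ hatE e i) ⊓ e i) = _
    rw [h.map_inf, h.map_sup, hx', hhat, hh.2 i]
    rfl
  calc sc e (f (sc e x i)) j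
      ≤ sc e (g (sc e x i)) j :=
        hc.c6 f hf g hg i j hfle (sc e x i) hxi_mem inf_le_right
    _ ≤ sc e x j := hgx
end
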